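/- arXiv:1204.5309 — 2 statements merged into one kernel-verified Lean document; each statement's English description precedes it below -/
import Mathlib

section
/- Let X be an n×k real matrix with 1 < n ≤ k such that X has full rank n and every column of X has unit Euclidean norm. Then 0 < det((1/k)·X·Xᵀ) ≤ (1/n)^n. -/
/-!
The Gram matrix `X Xᵀ` is positive definite since `X` has full row rank, and its trace is the
sum of the squared column norms, namely `k`. AM–GM applied to the eigenvalues of a positive
semidefinite matrix bounds its determinant by `(trace / n) ^ n`.
-/

open Matrix

theorem Real.prod_le_sum_div_card_pow {ι : Type*} (s : Finset ι) (z : ι → ℝ)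
    (hz : ∀ i ∈ s, 0 ≤ z i) : ∏ i ∈ s, z i ≤ ((∑ i ∈ s, z i) / s.card) ^ s.card := by
  rcases s.eq_empty_or_nonempty with rfl | hs
  · simp
  have hcard : (0 : ℝ) < s.card := by exact_mod_cast hs.card_pos
  have amgm := Real.geom_mean_le_arith_mean_weighted s (fun _ ↦ 1 / (s.card : ℝ)) z
    (fun _ _ ↦ by positivity) (by simp [hcard.ne']) hz
  rw [Real.finsetProd_rpow s z hz, ← Finset.mul_sum, one_div_mul_eq_div] at amgm
  have hprod : 0 ≤ ∏ i ∈ s, z i := Finset.prod_nonneg hz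
  calc ∏ i ∈ s, z i = ((∏ i ∈ s, z i) ^ (1 / (s.card : ℝ))) ^ s.card := by
        rw [← Real.rpow_natCast, ← Real.rpow_mul hprod, one_div_mul_cancel hcard.ne', Real.rpow_one]
    _ ≤ ((∑ i ∈ s, z i) / s.card) ^ s.card := by gcongr

theorem Matrix.PosSemidef.det_le_trace_div_card_pow {n : Type*} [Fintype n] [DecidableEq n]
    {A : Matrix n n ℝ} (hA : A.PosSemidef) :
    A.det ≤ (A.trace / Fintype.card n) ^ Fintype.card n := by
  rw [hA.isHermitian.det_eq_prod_eigenvalues, hA.isHermitian.trace_eq_sum_eigenvalues]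
  simpa using Real.prod_le_sum_div_card_pow Finset.univ _ fun i _ ↦ hA.eigenvalues_nonneg i

theorem Matrix.vecMul_injective_of_rank_eq_card {m n K : Type*} [Fintype m] [Fintype n] [Field K]
    {A : Matrix m n K} (hA : A.rank = Fintype.card m) : Function.Injective A.vecMul := by
  have hker : Module.finrank K (LinearMap.ker Aᵀ.mulVecLin) = 0 := by
    have := LinearMap.finrank_range_add_finrank_ker Aᵀ.mulVecLin
    rw [← Matrix.rank, rank_transpose, hA, Module.finrank_fintype_fun_eq_card] at this
    omega
  have := LinearMap.ker_eq_bot.mp (Submodule.finrank_eq_zero.mp hker)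
  simpa [Function.Injective, mulVec_transpose] using this

theorem Matrix.trace_mul_transpose_of_sum_sq_col_eq_one {m n R : Type*} [Fintype m] [Fintype n]
    [CommSemiring R] {A : Matrix m n R} (hA : ∀ j, ∑ i, A i j ^ 2 = 1) :
    (A * Aᵀ).trace = Fintype.card n := by
  rw [trace_mul_comm]
  simp [trace, mul_apply, ← sq, hA]

theorem stmt_0 {n k : ℕ} (hn : 1 < n) (hnk : n ≤ k)
    (X : Matrix (Fin n) (Fin k) ℝ)
    (hrank : X.rank = n)
    (hcol : ∀ j, ∑ i, X i j ^ 2 = 1) :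
    0 < ((1 / (k : ℝ)) • (X * Xᵀ)).det ∧
      ((1 / (k : ℝ)) • (X * Xᵀ)).det ≤ (1 / (n : ℝ)) ^ n := by
  have hk : (0 : ℝ) < k := by exact_mod_cast (by omega : 0 < k)
  have hB : ((1 / (k : ℝ)) • (X * Xᵀ)).PosDef := by
    have := PosDef.mul_conjTranspose_self X
      (vecMul_injective_of_rank_eq_card (by rw [hrank, Fintype.card_fin]))
    exact (conjTranspose_eq_transpose_of_trivial X ▸ this).smul (by positivity)
  refine ⟨hB.det_pos, ?_⟩
  calc ((1 / (k : ℝ)) • (X * Xᵀ)).det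
      ≤ (((1 / (k : ℝ)) • (X * Xᵀ)).trace / n) ^ n := by
        simpa using hB.posSemidef.det_le_trace_div_card_pow
    _ = (1 / (n : ℝ)) ^ n := by
        rw [trace_smul, trace_mul_transpose_of_sum_sq_col_eq_one hcol, Fintype.card_fin,
          smul_eq_mul, one_div_mul_cancel hk.ne']
end

section
/- Let Ω ∈ ℝ^{k×n} be a matrix whose transpose lies in OB(n,k) (so its rows have unit norm and it has full column rank n), and suppose Ω minimizes h(Ω) = -(1/(n log n))·log det((1/k)·ΩᵀΩ) over all such matrices. Then all singular values of Ω are equal, i.e., its condition number is 1. -/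
/-!
For `Ω` with unit rows, the Gram matrix `ΩᵀΩ` has trace `k`, so AM–GM on its eigenvalues gives
`det ((1/k) ΩᵀΩ) ≤ (1/n)^n`, with equality only if `ΩᵀΩ = (k/n) • 1`; in terms of the penalty,
`h(Ω) ≥ 1` with equality exactly at tight frames. The bound is attained: the real Hartley frame with
entries `cas (2π m (j - (n-1)/2) / k) / √n` is a unit-norm tight frame for every `n ≤ k`. A
minimizer therefore has `h(Ω) ≤ 1`, which forces the equality case of AM–GM.
-/

open Matrix

/-- Penalty function `h(Ω) = -(1/(n log n)) log det((1/k) ΩᵀΩ)` for `Ω : k × n`. -/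
noncomputable def penaltyH {n k : ℕ} (Ω : Matrix (Fin k) (Fin n) ℝ) : ℝ :=
  -(1 / ((n : ℝ) * Real.log n)) * Real.log (((1 / (k : ℝ)) • (Ωᵀ * Ω)).det)

open Real Finset

theorem sum_exp_two_pi_I_mul_int_div (k : ℕ) (d : ℤ) :
    ∑ m : Fin k, Complex.exp (2 * π * Complex.I * m * d / k) =
      if (k : ℤ) ∣ d then (k : ℂ) else 0 := by
  obtain rfl | hk := eq_or_ne k 0
  · simp
  set ζ := Complex.exp (2 * π * Complex.I / k)
  have hζ : IsPrimitiveRoot ζ k := Complex.isPrimitiveRoot_exp k hk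
  have hterm (m : ℕ) : Complex.exp (2 * π * Complex.I * m * d / k) = (ζ ^ d) ^ m := by
    rw [← Complex.exp_int_mul, ← Complex.exp_nat_mul]
    ring_nf
  rw [Fin.sum_univ_eq_sum_range (fun m => Complex.exp (2 * π * Complex.I * m * d / k))]
  simp_rw [hterm]
  split_ifs with hd
  · simp [(hζ.zpow_eq_one_iff_dvd d).mpr hd]
  · have hζk : (ζ ^ d) ^ k = 1 := by
      rw [← zpow_natCast, ← _root_.zpow_mul, mul_comm, _root_.zpow_mul, zpow_natCast,
        hζ.pow_eq_one, _root_.one_zpow]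
    rw [geom_sum_eq ((hζ.zpow_eq_one_iff_dvd d).not.mpr hd), hζk, sub_self, zero_div]

theorem sum_cos_two_pi_mul_int_div_eq_zero {k : ℕ} {d : ℤ} (hd : ¬ (k : ℤ) ∣ d) :
    ∑ m : Fin k, cos (2 * π * m * d / k) = 0 := by
  have h := congrArg Complex.re (sum_exp_two_pi_I_mul_int_div k d)
  rw [if_neg hd, Complex.re_sum, Complex.zero_re] at h
  convert h using 2 with m
  rw [← Complex.exp_ofReal_mul_I_re]
  push_cast
  ring_nf

theorem sum_sin_two_pi_mul_int_div_eq_zero (k : ℕ) (d : ℤ) :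
    ∑ m : Fin k, sin (2 * π * m * d / k) = 0 := by
  have h := congrArg Complex.im (sum_exp_two_pi_I_mul_int_div k d)
  rw [Complex.im_sum, apply_ite Complex.im, Complex.natCast_im, Complex.zero_im, ite_self] at h
  convert h using 2 with m
  rw [← Complex.exp_ofReal_mul_I_im]
  push_cast
  ring_nf

noncomputable def Real.cas (x : ℝ) : ℝ := cos x + sin x

theorem Real.cas_mul_cas (x y : ℝ) : cas x * cas y = cos (x - y) + sin (x + y) := by
  rw [cas, cas, cos_sub, sin_add]
  ring

theorem Real.cas_sq (x : ℝ) : cas x ^ 2 = 1 + sin (2 * x) := by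
  rw [sq, cas_mul_cas, sub_self, cos_zero, two_mul]

/-- The frequencies `j - (n - 1) / 2` are symmetric about `0`, so the `sin (2 x)` terms of
`cas x ^ 2 = 1 + sin (2 x)` cancel along each row; their differences are nonzero integers of
absolute value `< k`, so distinct columns are orthogonal. -/
noncomputable def hartleyFrame (k n : ℕ) : Matrix (Fin k) (Fin n) ℝ :=
  of fun m j => cas (2 * π * m * (j - (n - 1) / 2) / k) / √n

theorem hartleyFrame_transpose_mul_self {k n : ℕ} (hnk : n ≤ k) :
    (hartleyFrame k n)ᵀ * hartleyFrame k n = ((k : ℝ) / n) • 1 := by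
  ext i j
  have hterm (m : Fin k) : hartleyFrame k n m i * hartleyFrame k n m j =
      (cos (2 * π * m * ((i : ℤ) - j : ℤ) / k) +
        sin (2 * π * m * ((i : ℤ) + j + 1 - n : ℤ) / k)) / n := by
    rw [hartleyFrame, of_apply, of_apply, div_mul_div_comm, Real.mul_self_sqrt n.cast_nonneg,
      cas_mul_cas]
    push_cast
    ring_nf
  simp only [mul_apply, transpose_apply, hterm, ← Finset.sum_div, Finset.sum_add_distrib,
    sum_sin_two_pi_mul_int_div_eq_zero, add_zero, Matrix.smul_apply, one_apply, smul_eq_mul]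
  split_ifs with hij
  · simp [hij]
  · have hnd : ¬ (k : ℤ) ∣ ((i : ℤ) - j) := fun hdvd =>
      hij (Fin.ext (by have := Int.eq_zero_of_abs_lt_dvd hdvd (by rw [abs_lt]; omega); omega))
    rw [sum_cos_two_pi_mul_int_div_eq_zero hnd, zero_div, mul_zero]

theorem hartleyFrame_sum_sq {k n : ℕ} (hn : n ≠ 0) (m : Fin k) :
    ∑ j, hartleyFrame k n m j ^ 2 = 1 := by
  set x : Fin n → ℝ := fun j => 2 * π * m * (j - (n - 1) / 2) / k
  have hrev (j : Fin n) : x j.rev = - x j := by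
    simp only [x, Fin.val_rev, Nat.cast_sub (Nat.succ_le_of_lt j.isLt)]
    push_cast
    ring
  have hsin : ∑ j, sin (2 * x j) = 0 := by
    have := Equiv.sum_comp Fin.revPerm fun j => sin (2 * x j)
    simp only [Fin.revPerm_apply, hrev, mul_neg, sin_neg, Finset.sum_neg_distrib] at this
    linarith
  have hn' : (n : ℝ) ≠ 0 := Nat.cast_ne_zero.mpr hn
  simp only [hartleyFrame, of_apply, div_pow, Real.sq_sqrt n.cast_nonneg, cas_sq, ← Finset.sum_div]
  rw [Finset.sum_add_distrib, hsin]
  simp [hn']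

theorem Real.eq_arith_mean_of_arith_mean_pow_le_prod {ι : Type*} [Fintype ι] [Nonempty ι]
    {z : ι → ℝ} (hz : ∀ i, 0 ≤ z i)
    (h : ((∑ i, z i) / Fintype.card ι) ^ Fintype.card ι ≤ ∏ i, z i) :
    ∀ j, z j = (∑ i, z i) / Fintype.card ι := by
  set N := Fintype.card ι
  have hN : N ≠ 0 := Fintype.card_ne_zero
  have hw : ∑ _i : ι, (N : ℝ)⁻¹ = 1 := by simp [N, hN]
  have hmean : ∑ i, (N : ℝ)⁻¹ * z i = (∑ i, z i) / N := by rw [← Finset.mul_sum, inv_mul_eq_div]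
  have hgeom : ∏ i, z i ^ (N⁻¹ : ℝ) = (∏ i, z i) ^ (N⁻¹ : ℝ) :=
    Real.finsetProd_rpow _ _ (fun i _ => hz i) _
  have hmean_nonneg : 0 ≤ (∑ i, z i) / N := div_nonneg (sum_nonneg fun i _ => hz i) N.cast_nonneg
  have hamgm := Real.geom_mean_eq_arith_mean_weighted_iff_of_pos' univ (fun _ => (N : ℝ)⁻¹) z
    (fun _ _ => by positivity) hw (fun i _ => hz i)
  simp only [hmean, mem_univ, forall_const] at hamgm
  refine hamgm.mp (le_antisymm ?_ ?_)
  · rw [← hmean]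
    exact Real.geom_mean_le_arith_mean_weighted univ _ z (fun _ _ => by positivity) hw
      (fun i _ => hz i)
  · calc (∑ i, z i) / N = (((∑ i, z i) / N) ^ N) ^ (N⁻¹ : ℝ) :=
          (Real.pow_rpow_inv_natCast hmean_nonneg hN).symm
      _ ≤ (∏ i, z i) ^ (N⁻¹ : ℝ) := by gcongr
      _ = ∏ i, z i ^ (N⁻¹ : ℝ) := hgeom.symm

namespace Matrix

theorem trace_transpose_mul_self {m n R : Type*} [Fintype m] [Fintype n] [CommSemiring R]
    (A : Matrix m n R) : (Aᵀ * A).trace = ∑ i, ∑ j, A i j ^ 2 := by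
  simp only [trace, diag_apply, mul_apply, transpose_apply, sq]
  exact Finset.sum_comm

variable {n : Type*} [Fintype n] [DecidableEq n]

theorem IsHermitian.eq_smul_one_of_eigenvalues_eq {𝕜 : Type*} [RCLike 𝕜] {A : Matrix n n 𝕜}
    (hA : A.IsHermitian) {c : ℝ} (h : ∀ i, hA.eigenvalues i = c) : A = c • (1 : Matrix n n 𝕜) := by
  have hdiag : diagonal (RCLike.ofReal ∘ hA.eigenvalues) = (c : 𝕜) • (1 : Matrix n n 𝕜) := by
    rw [smul_one_eq_diagonal]
    simp [Function.comp_def, h]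
  rw [hA.spectral_theorem, hdiag, map_smul, map_one, RCLike.real_smul_eq_coe_smul (K := 𝕜)]

theorem PosSemidef.det_pos_of_rank_eq_card {A : Matrix n n ℝ} (hA : A.PosSemidef)
    (h : A.rank = Fintype.card n) : 0 < A.det := by
  have hne : ∀ i, hA.1.eigenvalues i ≠ 0 := by
    by_contra! ⟨i, hi⟩
    have hlt := Fintype.card_subtype_lt (p := fun j => hA.1.eigenvalues j ≠ 0) (not_not.mpr hi)
    rw [← hA.1.rank_eq_card_non_zero_eigs, h] at hlt
    exact lt_irrefl _ hlt
  refine lt_of_le_of_ne hA.det_nonneg (Ne.symm ?_)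
  rw [hA.1.det_eq_prod_eigenvalues]
  simpa using prod_ne_zero_iff.mpr fun i _ => hne i

theorem PosSemidef.eq_smul_one_of_trace_div_pow_le_det [Nonempty n] {A : Matrix n n ℝ}
    (hA : A.PosSemidef) (h : (A.trace / Fintype.card n) ^ Fintype.card n ≤ A.det) :
    A = (A.trace / Fintype.card n) • 1 := by
  have htrace : A.trace = ∑ i, hA.1.eigenvalues i := by
    simpa using hA.1.trace_eq_sum_eigenvalues
  have hdet : A.det = ∏ i, hA.1.eigenvalues i := by
    simpa using hA.1.det_eq_prod_eigenvalues
  rw [htrace, hdet] at h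
  rw [htrace]
  exact hA.1.eq_smul_one_of_eigenvalues_eq
    (Real.eq_arith_mean_of_arith_mean_pow_le_prod hA.eigenvalues_nonneg h)

theorem rank_eq_of_transpose_mul_self_eq_smul_one {m R : Type*} [Fintype m] [Field R]
    [LinearOrder R] [IsStrictOrderedRing R] {A : Matrix m n R} {c : R} (hc : c ≠ 0)
    (h : Aᵀ * A = c • 1) : A.rank = Fintype.card n := by
  rw [← rank_transpose_mul_self, h, rank_of_isUnit]
  rw [isUnit_iff_isUnit_det, det_smul, det_one, mul_one]
  exact (pow_ne_zero _ hc).isUnit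

end Matrix

theorem log_one_div_pow_self_neg {n : ℕ} (hn : 1 < n) : log ((1 / (n : ℝ)) ^ n) < 0 := by
  have hinv : 1 / (n : ℝ) < 1 := (div_lt_one (by positivity)).mpr (by exact_mod_cast hn)
  exact log_neg (by positivity) (pow_lt_one₀ (by positivity) hinv (by omega))

theorem penaltyH_eq_log_det_div {n k : ℕ} (Ω : Matrix (Fin k) (Fin n) ℝ) :
    penaltyH Ω = log ((1 / (k : ℝ)) • (Ωᵀ * Ω)).det / log ((1 / (n : ℝ)) ^ n) := by
  simp only [penaltyH, log_pow, one_div, log_inv]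
  ring

theorem penaltyH_eq_one_of_transpose_mul_self_eq {n k : ℕ} (hn : 1 < n) (hk : k ≠ 0)
    {Y : Matrix (Fin k) (Fin n) ℝ} (h : Yᵀ * Y = ((k : ℝ) / n) • 1) : penaltyH Y = 1 := by
  have hscale : 1 / (k : ℝ) * (k / n) = 1 / n := by field_simp
  rw [penaltyH_eq_log_det_div, h, smul_smul, hscale, det_smul, det_one, mul_one,
    Fintype.card_fin]
  exact div_self (log_one_div_pow_self_neg hn).ne

theorem one_div_pow_le_det_of_penaltyH_le_one {n k : ℕ} (hn : 1 < n)
    {Ω : Matrix (Fin k) (Fin n) ℝ} (hdet : 0 < ((1 / (k : ℝ)) • (Ωᵀ * Ω)).det)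
    (h : penaltyH Ω ≤ 1) : (1 / (n : ℝ)) ^ n ≤ ((1 / (k : ℝ)) • (Ωᵀ * Ω)).det := by
  rw [penaltyH_eq_log_det_div, div_le_one_of_neg (log_one_div_pow_self_neg hn)] at h
  exact (log_le_log_iff (by positivity) hdet).mp h

theorem transpose_mul_self_eq_of_penaltyH_le_one {n k : ℕ} (hn : 1 < n)
    {Ω : Matrix (Fin k) (Fin n) ℝ} (hrank : Ω.rank = n) (hrow : ∀ i, ∑ j, Ω i j ^ 2 = 1)
    (hpen : penaltyH Ω ≤ 1) : Ωᵀ * Ω = ((k : ℝ) / n) • 1 := by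
  have : Nonempty (Fin n) := ⟨⟨0, by omega⟩⟩
  have hGram : (Ωᵀ * Ω).PosSemidef := by
    simpa [conjTranspose_eq_transpose_of_trivial] using posSemidef_conjTranspose_mul_self Ω
  have hk : k ≠ 0 := by
    rintro rfl
    have := rank_le_card_height Ω
    simp only [Fintype.card_fin] at this
    omega
  set A := (1 / (k : ℝ)) • (Ωᵀ * Ω) with hA_def
  have hdet : 0 < A.det := by
    rw [det_smul]
    refine mul_pos (by positivity) (hGram.det_pos_of_rank_eq_card ?_)
    rw [rank_transpose_mul_self, hrank, Fintype.card_fin]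
  have htrace : A.trace = 1 := by
    rw [trace_smul, trace_transpose_mul_self]
    simp [hrow, hk]
  have hA : A = (1 / (n : ℝ)) • 1 := by
    have h := (hGram.smul (by positivity : (0 : ℝ) ≤ 1 / k)).eq_smul_one_of_trace_div_pow_le_det
    rw [htrace, Fintype.card_fin] at h
    exact h (one_div_pow_le_det_of_penaltyH_le_one hn hdet hpen)
  calc Ωᵀ * Ω = (k : ℝ) • A := by
        rw [hA_def, smul_smul, mul_one_div_cancel (Nat.cast_ne_zero.mpr hk), one_smul]
    _ = ((k : ℝ) / n) • 1 := by rw [hA, smul_smul, mul_one_div]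

theorem stmt_4 {n k : ℕ} (hn : 1 < n) (hnk : n ≤ k)
    (Ω : Matrix (Fin k) (Fin n) ℝ)
    (hrank : Ω.rank = n)
    (hrow : ∀ i, ∑ j, Ω i j ^ 2 = 1)
    (hmin : ∀ Y : Matrix (Fin k) (Fin n) ℝ,
      Y.rank = n → (∀ i, ∑ j, Y i j ^ 2 = 1) → penaltyH Ω ≤ penaltyH Y) :
    ∃ σ : ℝ, 0 < σ ∧ Ωᵀ * Ω = (σ ^ 2) • (1 : Matrix (Fin n) (Fin n) ℝ) := by
  have hk : k ≠ 0 := by omega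
  have hframe := hartleyFrame_transpose_mul_self hnk
  have hframe_rank : (hartleyFrame k n).rank = n := by
    simpa using rank_eq_of_transpose_mul_self_eq_smul_one (by positivity) hframe
  have hpen : penaltyH Ω ≤ 1 := by
    rw [← penaltyH_eq_one_of_transpose_mul_self_eq hn hk hframe]
    exact hmin _ hframe_rank (hartleyFrame_sum_sq (by omega))
  refine ⟨√((k : ℝ) / n), by positivity, ?_⟩
  rw [sq_sqrt (by positivity)]
  exact transpose_mul_self_eq_of_penaltyH_le_one hn hrank hrow hpen
end
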